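/- arXiv:cond-mat/0605658 — 6 statements merged into one kernel-verified Lean document; each statement's English description precedes it below -/
import Mathlib

section
/- Let X be a compact metric space, I : X → [0,∞] lower semicontinuous, and H̃ : X → ℝ continuous. Define s(u) = -inf{I(x) : x ∈ X, H̃(x) = u} for u ∈ ℝ (with s(u) = -∞ if the constraint set is empty). Then s is upper semicontinuous on ℝ. -/
open scoped ENNReal

/-- The microcanonical entropy `s(u) = -inf{I(x) : H̃(x) = u}` (with `inf ∅ = +∞`,
so `s(u) = -∞` off the range of `H̃`). -/
noncomputable def microEnt {X : Type*} (I : X → ℝ≥0∞) (H : X → ℝ) (u : ℝ) : EReal :=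
  -(⨅ x : {y : X // H y = u}, ((I x.1 : ℝ≥0∞) : EReal))

/- If `c' < inf f` over the fiber of `u`, the compact sublevel set `{f ≤ c'}` has a closed image
under `H` missing `u`; off that image every fiber infimum is at least `c'`. -/
theorem LowerSemicontinuous.iInf_fiber {X Y α : Type*} [TopologicalSpace X] [CompactSpace X]
    [TopologicalSpace Y] [T2Space Y] [CompleteLinearOrder α] [DenselyOrdered α] {f : X → α}
    (hf : LowerSemicontinuous f) {H : X → Y} (hH : Continuous H) :
    LowerSemicontinuous fun u => ⨅ x : {x // H x = u}, f x := by
  intro u c hc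
  obtain ⟨c', hcc', hc'⟩ := exists_between hc
  have hK : IsClosed (H '' (f ⁻¹' Set.Iic c')) :=
    ((hf.isClosed_preimage c').isCompact.image hH).isClosed
  have hu : u ∉ H '' (f ⁻¹' Set.Iic c') := by
    rintro ⟨x, hxc', rfl⟩
    exact (iInf_le _ ⟨x, rfl⟩ |>.trans hxc').not_gt hc'
  filter_upwards [hK.isOpen_compl.mem_nhds hu] with u' hu'
  refine hcc'.trans_le (le_iInf fun x => ?_)
  by_contra! hx
  exact hu' ⟨x, hx.le, x.2⟩

/-- On a compact metric space, with `I` lower semicontinuous and `H̃` continuous,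
the microcanonical entropy is upper semicontinuous on `ℝ`. -/
theorem stmt4 {X : Type*} [MetricSpace X] [CompactSpace X]
    (I : X → ℝ≥0∞) (hI : LowerSemicontinuous I)
    (H : X → ℝ) (hH : Continuous H) :
    UpperSemicontinuous (microEnt I H) := by
  have hJ : LowerSemicontinuous fun x => ((I x : ℝ≥0∞) : EReal) :=
    continuous_coe_ennreal_ereal.comp_lowerSemicontinuous hI
      fun _ _ => EReal.coe_ennreal_le_coe_ennreal_iff.mpr
  exact continuous_neg.comp_lowerSemicontinuous_antitone (hJ.iInf_fiber hH)
    fun _ _ => EReal.neg_le_neg_iff.mpr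
end

section
/- Let X be a set, I : X → [0,∞], H̃ : X → ℝ. Define s(u) = -inf{I(x) : H̃(x) = u}, E^u = {x : H̃(x) = u and I(x) = -s(u)}, and E_β = {x : I(x) + βH̃(x) = inf_{y}(I(y) + βH̃(y))}. Suppose u ∈ ℝ with s(u) > -∞ and the infimum defining s(u) is attained, and suppose β ∈ ℝ is such that s has a strictly supporting line at u with slope β, i.e., s(v) < s(u) + β(v-u) for all v ≠ u. Then E^u = E_β. -/
open scoped ENNReal

/-!
Write `F = I + β H̃` and `c = -s(u) + β u`. Every `y` satisfies `I(y) ≥ -s(H̃ y)`, so the strictly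
supporting line gives `F(y) > c` whenever `H̃ y ≠ u`, while on the fibre `H̃ = u` we have
`F(y) ≥ c` with equality exactly when `I(y) = -s(u)`. Attainment of `s(u)` makes `c` the minimum
of `F`, and both sets are then `{F = c}`.
-/

section

variable {X : Type*} (I : X → ℝ≥0∞) (H : X → ℝ)

theorem neg_microEnt_le (y : X) : -microEnt I H (H y) ≤ I y := by
  rw [microEnt, neg_neg]
  exact iInf_le (fun x : {z : X // H z = H y} => ((I x.1 : ℝ≥0∞) : EReal)) ⟨y, rfl⟩

theorem microEnt_le_zero (u : ℝ) : microEnt I H u ≤ 0 := by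
  rw [microEnt, EReal.neg_le, neg_zero]
  exact le_iInf fun _ => EReal.coe_ennreal_nonneg _

theorem exists_microEnt_eq_coe {u : ℝ} (hfin : microEnt I H u ≠ ⊥) :
    ∃ σ : ℝ, microEnt I H u = σ :=
  ⟨_, (EReal.coe_toReal ((microEnt_le_zero I H u).trans_lt EReal.zero_lt_top).ne hfin).symm⟩

variable {I H}

theorem coe_le_add_of_microEnt_le {y : X} {t : ℝ} (h : microEnt I H (H y) ≤ t) (r : ℝ) :
    ((-t + r : ℝ) : EReal) ≤ I y + r := by
  rw [EReal.coe_add, EReal.coe_neg]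
  gcongr
  exact (EReal.neg_le_neg_iff.2 h).trans (neg_microEnt_le I H y)

theorem coe_lt_add_of_microEnt_lt {y : X} {t : ℝ} (h : microEnt I H (H y) < t) (r : ℝ) :
    ((-t + r : ℝ) : EReal) < I y + r := by
  rw [EReal.coe_add, EReal.coe_neg]
  exact EReal.add_lt_add_right_coe
    ((EReal.neg_lt_neg_iff.2 h).trans_le (neg_microEnt_le I H y)) r

end

/-- Full equivalence of ensembles: if `s(u) > -∞`, the infimum defining `s(u)` is
attained, and `s` has a strictly supporting line at `u` with slope `β`, then the set
`E^u` of microcanonical equilibrium macrostates coincides with the set `E_β` of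
canonical equilibrium macrostates. -/
theorem stmt7 {X : Type*} (I : X → ℝ≥0∞) (H : X → ℝ) (u β : ℝ)
    (hfin : microEnt I H u ≠ ⊥)
    (hatt : ∃ x : X, H x = u ∧ (I x : EReal) = -(microEnt I H u))
    (hsupp : ∀ v : ℝ, v ≠ u →
      microEnt I H v < microEnt I H u + ((β * (v - u) : ℝ) : EReal)) :
    {x : X | H x = u ∧ (I x : EReal) = -(microEnt I H u)} =
      {x : X | (I x : EReal) + ((β * H x : ℝ) : EReal) =
        ⨅ y : X, ((I y : EReal) + ((β * H y : ℝ) : EReal))} := by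
  obtain ⟨σ, hσ⟩ := exists_microEnt_eq_coe I H hfin
  have hlt : ∀ y, H y ≠ u → ((-σ + β * u : ℝ) : EReal) < I y + ((β * H y : ℝ) : EReal) := by
    intro y hy
    have h := hsupp (H y) hy
    rw [hσ, ← EReal.coe_add] at h
    convert coe_lt_add_of_microEnt_lt h (β * H y) using 2
    ring
  have hle : ∀ y, ((-σ + β * u : ℝ) : EReal) ≤ I y + ((β * H y : ℝ) : EReal) := by
    intro y
    by_cases hy : H y = u
    · rw [← hy]
      exact coe_le_add_of_microEnt_le (hy ▸ hσ).le _
    · exact (hlt y hy).le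
  obtain ⟨x₀, hx₀u, hx₀I⟩ := hatt
  have hmin : ⨅ y : X, ((I y : EReal) + ((β * H y : ℝ) : EReal)) = ((-σ + β * u : ℝ) : EReal) :=
    le_antisymm (iInf_le_of_le x₀ (by rw [hx₀I, hx₀u, hσ]; rfl)) (le_iInf hle)
  ext x
  simp only [Set.mem_ofPred_eq, hmin, hσ]
  by_cases hx : H x = u
  · rw [hx, EReal.coe_add, (EReal.addLECancellable_coe _).inj_left, EReal.coe_neg]
    exact and_iff_right rfl
  · simp only [hx, false_and, false_iff]
    exact (hlt x hx).ne'
end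

section
/- Let X be a set, I : X → [0,∞], H̃ : X → ℝ. Define s(u) = -inf{I(x) : H̃(x) = u}, E^u = {x : H̃(x) = u and I(x) = -s(u)}, and E_β = {x : I(x) + βH̃(x) is minimized over X}. Fix u with s(u) > -∞. If s has no supporting line at u (i.e., for every β ∈ ℝ there exists v with s(v) > s(u) + β(v-u)), then E^u ∩ E_β = ∅ for every β ∈ ℝ. -/
open scoped ENNReal

/-- Nonequivalence of ensembles: if `s(u) > -∞` and `s` has no supporting line at `u`,
then for every `β` the sets of microcanonical and canonical equilibrium macrostates
are disjoint. -/
theorem stmt8 {X : Type*} (I : X → ℝ≥0∞) (H : X → ℝ) (u : ℝ)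
    (hfin : microEnt I H u ≠ ⊥)
    (hnosupp : ∀ β : ℝ, ∃ v : ℝ,
      microEnt I H u + ((β * (v - u) : ℝ) : EReal) < microEnt I H v) :
    ∀ β : ℝ,
      {x : X | H x = u ∧ (I x : EReal) = -(microEnt I H u)} ∩
        {x : X | (I x : EReal) + ((β * H x : ℝ) : EReal) =
          ⨅ y : X, ((I y : EReal) + ((β * H y : ℝ) : EReal))} = ∅ := by
  intro β
  ext x
  simp only [Set.mem_inter_iff, Set.mem_setOf_eq, Set.mem_empty_iff_false, iff_false, not_and]
  rintro ⟨hHx, hIx⟩ hcan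
  -- microEnt I H u = -(I x)
  have hmu : microEnt I H u = -((I x : ℝ≥0∞) : EReal) := by
    rw [hIx, neg_neg]
  have hItop : I x ≠ ⊤ := by
    intro h
    rw [h] at hmu
    simp [EReal.coe_ennreal_top] at hmu
    exact hfin hmu
  obtain ⟨a, ha⟩ : ∃ a : NNReal, I x = a := ⟨(I x).toNNReal, (ENNReal.coe_toNNReal hItop).symm⟩
  have hacoe : ((I x : ℝ≥0∞) : EReal) = ((a : ℝ) : EReal) := by
    rw [ha]; exact EReal.coe_nnreal_eq_coe_real a
  obtain ⟨v, hv⟩ := hnosupp β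
  rw [hmu, hacoe] at hv
  -- hv : -(a:ℝ) + β(v-u) < microEnt I H v = -(inf …)
  have hv' : (⨅ y : {y : X // H y = v}, ((I y.1 : ℝ≥0∞) : EReal)) <
      (((a : ℝ) - β * (v - u) : ℝ) : EReal) := by
    rw [microEnt] at hv
    rw [← EReal.neg_lt_neg_iff]
    calc -(((a : ℝ) - β * (v - u) : ℝ) : EReal)
        = -((a : ℝ) : EReal) + ((β * (v - u) : ℝ) : EReal) := by
          rw [← EReal.coe_neg, ← EReal.coe_neg, ← EReal.coe_add]
          norm_cast
          ring
      _ < _ := hv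
  obtain ⟨⟨y, hHy⟩, hy⟩ := iInf_lt_iff.mp hv'
  -- I y is finite
  have hytop : I y ≠ ⊤ := by
    intro h
    rw [h, EReal.coe_ennreal_top] at hy
    exact absurd hy (by simp)
  obtain ⟨b, hb⟩ : ∃ b : NNReal, I y = b := ⟨(I y).toNNReal, (ENNReal.coe_toNNReal hytop).symm⟩
  have hbcoe : ((I y : ℝ≥0∞) : EReal) = ((b : ℝ) : EReal) := by
    rw [hb]; exact EReal.coe_nnreal_eq_coe_real b
  rw [hbcoe, EReal.coe_lt_coe_iff] at hy
  -- canonical minimality at x gives I x + βu ≤ I y + βv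
  have hle : ((I x : ℝ≥0∞) : EReal) + ((β * H x : ℝ) : EReal) ≤
      ((I y : ℝ≥0∞) : EReal) + ((β * H y : ℝ) : EReal) := by
    rw [hcan]; exact iInf_le _ y
  rw [hHx, hHy, hacoe, hbcoe, ← EReal.coe_add, ← EReal.coe_add,
    EReal.coe_le_coe_iff] at hle
  nlinarith [hle, hy]
end

section
/- Let X be a set, I : X → [0,∞], H̃ : X → ℝ. Define s(u) = -inf{I(x) : H̃(x) = u} and E_β = {x ∈ X : I(x) + βH̃(x) = inf_y (I(y) + βH̃(y))}. Then for every β ∈ ℝ and every x ∈ E_β, setting u = H̃(x), one has s(u) > -∞ and x ∈ E^u = {y : H̃(y) = u, I(y) = -s(u)}. Consequently E_β = ⋃_{u ∈ H̃(E_β)} E^u. -/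
open scoped ENNReal

lemma microEnt_key {X : Type*} (I : X → ℝ≥0∞) (H : X → ℝ) (β : ℝ)
    (hne : ∃ x : X, I x ≠ ⊤) (x : X)
    (hx : (I x : EReal) + ((β * H x : ℝ) : EReal) =
        ⨅ y : X, ((I y : EReal) + ((β * H y : ℝ) : EReal))) :
    microEnt I H (H x) ≠ ⊥ ∧ (I x : EReal) = -(microEnt I H (H x)) := by
  obtain ⟨x₀, hx₀⟩ := hne
  -- I x is finite
  have hIx : (I x : EReal) ≠ ⊤ := by
    intro htop
    have h1 : (⨅ y : X, ((I y : EReal) + ((β * H y : ℝ) : EReal))) ≤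
        (I x₀ : EReal) + ((β * H x₀ : ℝ) : EReal) := iInf_le _ _
    rw [← hx, htop] at h1
    have h2 : (⊤ : EReal) + ((β * H x : ℝ) : EReal) = ⊤ := by
      exact EReal.top_add_of_ne_bot (by exact_mod_cast EReal.coe_ne_bot _)
    rw [h2] at h1
    have h3 : (I x₀ : EReal) + ((β * H x₀ : ℝ) : EReal) ≠ ⊤ := by
      exact (EReal.add_lt_top (fun h => hx₀ (EReal.coe_ennreal_eq_top_iff.mp h)) (EReal.coe_ne_top _)).ne
    exact h3 (top_le_iff.mp h1)
  -- the infimum over the fiber equals I x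
  have hinf : (⨅ y : {y : X // H y = H x}, ((I y.1 : ℝ≥0∞) : EReal)) = (I x : EReal) := by
    apply le_antisymm
    · exact iInf_le (fun y : {y : X // H y = H x} => ((I y.1 : ℝ≥0∞) : EReal)) ⟨x, rfl⟩
    · apply le_iInf
      rintro ⟨y, hy⟩
      have h1 : (I x : EReal) + ((β * H x : ℝ) : EReal) ≤
          (I y : EReal) + ((β * H y : ℝ) : EReal) := hx ▸ iInf_le _ _
      rw [hy] at h1
      exact (EReal.addLECancellable_coe (β * H x)).add_le_add_iff_right.mp h1
  constructor
  · simp only [microEnt, hinf]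
    intro h
    rw [EReal.neg_eq_bot_iff] at h
    exact hIx h
  · simp only [microEnt, hinf, neg_neg]

/-- Canonical equilibrium macrostates are always realized microcanonically: every
`x ∈ E_β` satisfies `s(H̃(x)) > -∞` and `x ∈ E^{H̃(x)}`; consequently
`E_β = ⋃_{u ∈ H̃(E_β)} E^u`. -/
theorem stmt9 {X : Type*} (I : X → ℝ≥0∞) (H : X → ℝ) (β : ℝ)
    (hne : ∃ x : X, I x ≠ ⊤) :
    (∀ x ∈ {x : X | (I x : EReal) + ((β * H x : ℝ) : EReal) =
        ⨅ y : X, ((I y : EReal) + ((β * H y : ℝ) : EReal))},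
      microEnt I H (H x) ≠ ⊥ ∧ (I x : EReal) = -(microEnt I H (H x))) ∧
    {x : X | (I x : EReal) + ((β * H x : ℝ) : EReal) =
        ⨅ y : X, ((I y : EReal) + ((β * H y : ℝ) : EReal))} =
      ⋃ u ∈ H '' {x : X | (I x : EReal) + ((β * H x : ℝ) : EReal) =
          ⨅ y : X, ((I y : EReal) + ((β * H y : ℝ) : EReal))},
        {y : X | H y = u ∧ (I y : EReal) = -(microEnt I H u)} := by
  refine ⟨fun x hx => microEnt_key I H β hne x hx, ?_⟩
  ext x
  simp only [Set.mem_setOf_eq, Set.mem_iUnion, Set.mem_image, exists_prop]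
  constructor
  · intro hx
    exact ⟨H x, ⟨x, hx, rfl⟩, rfl, (microEnt_key I H β hne x hx).2⟩
  · rintro ⟨u, ⟨z, hz, rfl⟩, hHx, hIx⟩
    have hz' := (microEnt_key I H β hne z hz).2
    have : (I x : EReal) = (I z : EReal) := by rw [hIx, hz']
    rw [this, hHx, hz]
end

section
/- Let X be a set, I : X → [0,∞], H̃ : X → ℝ, γ ≥ 0, β ∈ ℝ. Define s(u) = -inf{I(x) : H̃(x) = u}, s_γ(u) = s(u) - γu², and E_{β,γ} = {x : I(x) + βH̃(x) + γ[H̃(x)]² = inf_y (I(y) + βH̃(y) + γ[H̃(y)]²)}. Then for every x ∈ E_{β,γ}, setting u = H̃(x), one has s(u) > -∞ and x ∈ E^u = {y : H̃(y) = u, I(y) = -s(u)}. -/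
open scoped ENNReal

section

variable {X : Type*} (I : X → ℝ≥0∞) (H : X → ℝ)

theorem le_of_minimizes_add_comp (g : ℝ → ℝ) {x : X}
    (hmin : ∀ y, (I x : EReal) + (g (H x) : EReal) ≤ (I y : EReal) + (g (H y) : EReal))
    {y : X} (hy : H y = H x) : I x ≤ I y := by
  have h := hmin y
  rw [hy] at h
  exact_mod_cast (EReal.addLECancellable_coe _).add_le_add_iff_right.1 h

theorem ne_top_of_minimizes_add_comp (g : ℝ → ℝ) {x : X}
    (hmin : ∀ y, (I x : EReal) + (g (H x) : EReal) ≤ (I y : EReal) + (g (H y) : EReal))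
    (hne : ∃ y, I y ≠ ⊤) : I x ≠ ⊤ := by
  obtain ⟨y, hy⟩ := hne
  intro hx
  have h := hmin y
  rw [hx, EReal.coe_ennreal_top, EReal.top_add_of_ne_bot (EReal.coe_ne_bot _), top_le_iff] at h
  exact EReal.add_lt_top (by simpa using hy) (EReal.coe_ne_top _) |>.ne h

theorem microEnt_eq_neg_of_minimizes_on_fiber {x : X} (hfib : ∀ y, H y = H x → I x ≤ I y) :
    microEnt I H (H x) = -(I x : EReal) := by
  refine congrArg Neg.neg (le_antisymm (iInf_le_of_le ⟨x, rfl⟩ le_rfl) (le_iInf ?_))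
  rintro ⟨y, hy⟩
  exact_mod_cast hfib y hy

end

theorem stmt11_general {X : Type*} (I : X → ℝ≥0∞) (H : X → ℝ) (β γ : ℝ)
    (hne : ∃ x : X, I x ≠ ⊤) :
    ∀ x ∈ {x : X | (I x : EReal) + ((β * H x + γ * (H x) ^ 2 : ℝ) : EReal) =
        ⨅ y : X, ((I y : EReal) + ((β * H y + γ * (H y) ^ 2 : ℝ) : EReal))},
      microEnt I H (H x) ≠ ⊥ ∧ (I x : EReal) = -(microEnt I H (H x)) := by
  intro x hx
  set g : ℝ → ℝ := fun u ↦ β * u + γ * u ^ 2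
  have hmin : ∀ y, (I x : EReal) + (g (H x) : EReal) ≤ (I y : EReal) + (g (H y) : EReal) :=
    fun y ↦ hx.symm ▸ iInf_le _ y
  have hent := microEnt_eq_neg_of_minimizes_on_fiber I H fun y hy ↦
    le_of_minimizes_add_comp I H g hmin hy
  have hfin := ne_top_of_minimizes_add_comp I H g hmin hne
  refine ⟨?_, by rw [hent, neg_neg]⟩
  rw [hent, Ne, EReal.neg_eq_bot_iff]
  simpa using hfin

/-- Gaussian equilibrium macrostates are always realized microcanonically: every
`x ∈ E_{β,γ}` satisfies `s(H̃(x)) > -∞` and `x ∈ E^{H̃(x)}`. -/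
theorem stmt11 {X : Type*} (I : X → ℝ≥0∞) (H : X → ℝ) (β γ : ℝ) (hγ : 0 ≤ γ)
    (hne : ∃ x : X, I x ≠ ⊤) :
    ∀ x ∈ {x : X | (I x : EReal) + ((β * H x + γ * (H x) ^ 2 : ℝ) : EReal) =
        ⨅ y : X, ((I y : EReal) + ((β * H y + γ * (H y) ^ 2 : ℝ) : EReal))},
      microEnt I H (H x) ≠ ⊥ ∧ (I x : EReal) = -(microEnt I H (H x)) :=
  stmt11_general I H β γ hne
end

section
/- Let s : ℝ → ℝ ∪ {-∞} have domain a closed bounded interval [a,b], be continuous on [a,b], and be twice continuously differentiable on (a,b). Fix u ∈ (a,b) and suppose λ ≥ 0 is such that the set D = {v ∈ [a,b] : s(v) ≥ s(u) + s'(u)(v-u) + λ(v-u)²} is bounded. Then there exists γ₀ ≥ 0 such that for every γ > γ₀, s has a strictly supporting parabola at u with parameters (s'(u), γ): s(v) < s(u) + s'(u)(v-u) + γ(v-u)² for all v ∈ [a,b], v ≠ u. -/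
/-!
Write `f v = s v - s u - s'(u) (v - u)`. Near `u`, bounding `s''` on a compact ball and applying
the mean value inequality twice gives `f v ≤ M (v - u)²`. Away from `u`, `f` is bounded on the
compact interval `[a, b]` while `(v - u)²` is bounded below, so a large multiple of `(v - u)²`
dominates `f` there as well. Any `γ` beyond the resulting constant then works strictly.
-/

open Set Metric

theorem abs_sub_sub_mul_sub_le_mul_sq {s s' s'' : ℝ → ℝ} {u v M : ℝ}
    (hs : ∀ x ∈ uIcc u v, HasDerivWithinAt s (s' x) (uIcc u v) x)
    (hs' : ∀ x ∈ uIcc u v, HasDerivWithinAt s' (s'' x) (uIcc u v) x)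
    (hM : ∀ x ∈ uIcc u v, ‖s'' x‖ ≤ M) :
    |s v - s u - s' u * (v - u)| ≤ M * (v - u) ^ 2 := by
  have hM0 : 0 ≤ M := (norm_nonneg _).trans (hM u left_mem_uIcc)
  have hlip : ∀ x ∈ uIcc u v, ‖s' x - s' u‖ ≤ M * |v - u| := fun x hx =>
    calc ‖s' x - s' u‖ ≤ M * ‖x - u‖ :=
          (convex_uIcc u v).norm_image_sub_le_of_norm_hasDerivWithin_le hs' hM left_mem_uIcc hx
      _ ≤ M * |v - u| := mul_le_mul_of_nonneg_left (abs_sub_left_of_mem_uIcc hx) hM0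
  have hlin : ∀ x ∈ uIcc u v,
      HasDerivWithinAt (fun y => s y - s' u * y) (s' x - s' u) (uIcc u v) x := fun x hx =>
    (hs x hx).sub (by simpa using (hasDerivWithinAt_id x _).const_mul (s' u))
  calc |s v - s u - s' u * (v - u)| = ‖(s v - s' u * v) - (s u - s' u * u)‖ := by
        rw [Real.norm_eq_abs]; ring_nf
    _ ≤ M * |v - u| * ‖v - u‖ :=
        (convex_uIcc u v).norm_image_sub_le_of_norm_hasDerivWithin_le hlin hlip
          left_mem_uIcc right_mem_uIcc
    _ = M * (v - u) ^ 2 := by rw [Real.norm_eq_abs, mul_assoc, ← abs_mul, ← sq, abs_sq]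

theorem exists_sub_sub_mul_sub_le_mul_sq_of_isOpen {s s' s'' : ℝ → ℝ} {U : Set ℝ} {u : ℝ}
    (hU : IsOpen U) (hu : u ∈ U)
    (hs : ∀ x ∈ U, HasDerivAt s (s' x) x) (hs' : ∀ x ∈ U, HasDerivAt s' (s'' x) x)
    (hs'' : ContinuousOn s'' U) :
    ∃ δ > 0, ∃ M, ∀ v ∈ closedBall u δ, s v - s u - s' u * (v - u) ≤ M * (v - u) ^ 2 := by
  obtain ⟨δ, hδ, hball⟩ := nhds_basis_closedBall.mem_iff.mp (hU.mem_nhds hu)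
  obtain ⟨M, hM⟩ := (isCompact_closedBall u δ).exists_bound_of_continuousOn (hs''.mono hball)
  refine ⟨δ, hδ, M, fun v hv => ?_⟩
  have hJ : uIcc u v ⊆ closedBall u δ :=
    (convex_closedBall u δ).ordConnected.uIcc_subset (mem_closedBall_self hδ.le) hv
  refine le_of_abs_le (abs_sub_sub_mul_sub_le_mul_sq (fun x hx => ?_) (fun x hx => ?_)
    fun x hx => hM x (hJ hx))
  · exact (hs x (hball (hJ hx))).hasDerivWithinAt
  · exact (hs' x (hball (hJ hx))).hasDerivWithinAt

theorem exists_le_mul_sq_of_le_mul_sq_near {f : ℝ → ℝ} {S : Set ℝ} {u δ M : ℝ}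
    (hS : IsCompact S) (hf : ContinuousOn f S) (hδ : 0 < δ)
    (hnear : ∀ v ∈ closedBall u δ, f v ≤ M * (v - u) ^ 2) :
    ∃ K, 0 ≤ K ∧ ∀ v ∈ S, f v ≤ K * (v - u) ^ 2 := by
  obtain ⟨C, hC⟩ := hS.bddAbove_image hf
  set C₀ := max C 0
  refine ⟨max M (C₀ / δ ^ 2), le_max_of_le_right (by positivity), fun v hv => ?_⟩
  rcases le_or_gt (dist v u) δ with hvδ | hvδ
  · exact (hnear v hvδ).trans (by gcongr; exact le_max_left _ _)
  · have hsq : δ ^ 2 ≤ (v - u) ^ 2 := by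
      rw [Real.dist_eq] at hvδ
      simpa only [sq_abs] using pow_le_pow_left₀ hδ.le hvδ.le 2
    calc f v ≤ C₀ := (hC (mem_image_of_mem f hv)).trans (le_max_left _ _)
      _ = C₀ / δ ^ 2 * δ ^ 2 := by field_simp
      _ ≤ max M (C₀ / δ ^ 2) * (v - u) ^ 2 := by gcongr; exact le_max_right _ _

theorem stmt15_general (a b : ℝ) (s s' s'' : ℝ → ℝ)
    (hcont : ContinuousOn s (Set.Icc a b))
    (hd1 : ∀ v ∈ Set.Ioo a b, HasDerivAt s (s' v) v)
    (hd2 : ∀ v ∈ Set.Ioo a b, HasDerivAt s' (s'' v) v)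
    (hc2 : ContinuousOn s'' (Set.Ioo a b))
    (u : ℝ) (hu : u ∈ Set.Ioo a b) :
    ∃ γ₀ : ℝ, 0 ≤ γ₀ ∧ ∀ γ : ℝ, γ₀ < γ → ∀ v ∈ Set.Icc a b, v ≠ u →
      s v < s u + s' u * (v - u) + γ * (v - u) ^ 2 := by
  obtain ⟨δ, hδ, M, hnear⟩ :=
    exists_sub_sub_mul_sub_le_mul_sq_of_isOpen isOpen_Ioo hu hd1 hd2 hc2
  have hf : ContinuousOn (fun v => s v - s u - s' u * (v - u)) (Icc a b) := by fun_prop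
  obtain ⟨K, hK0, hK⟩ := exists_le_mul_sq_of_le_mul_sq_near isCompact_Icc hf hδ hnear
  refine ⟨K, hK0, fun γ hγ v hv hvu => ?_⟩
  have hpos : 0 < (v - u) ^ 2 := by positivity [sub_ne_zero.mpr hvu]
  nlinarith [hK v hv]

/-- Local version: if `s` is continuous on `[a,b]`, twice continuously differentiable
on `(a,b)`, `u ∈ (a,b)`, and for some `λ ≥ 0` the set
`D = {v ∈ [a,b] : s(v) ≥ s(u) + s'(u)(v-u) + λ(v-u)²}` is bounded, then there exists
`γ₀ ≥ 0` such that for all `γ > γ₀`, `s` has a strictly supporting parabola at `u`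
with parameters `(s'(u), γ)`. -/
theorem stmt15 (a b : ℝ) (hab : a < b) (s s' s'' : ℝ → ℝ)
    (hcont : ContinuousOn s (Set.Icc a b))
    (hd1 : ∀ v ∈ Set.Ioo a b, HasDerivAt s (s' v) v)
    (hd2 : ∀ v ∈ Set.Ioo a b, HasDerivAt s' (s'' v) v)
    (hc2 : ContinuousOn s'' (Set.Ioo a b))
    (u : ℝ) (hu : u ∈ Set.Ioo a b) (lam : ℝ) (hlam : 0 ≤ lam)
    (hDbdd : Bornology.IsBounded
      {v ∈ Set.Icc a b | s u + s' u * (v - u) + lam * (v - u) ^ 2 ≤ s v}) :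
    ∃ γ₀ : ℝ, 0 ≤ γ₀ ∧ ∀ γ : ℝ, γ₀ < γ → ∀ v ∈ Set.Icc a b, v ≠ u →
      s v < s u + s' u * (v - u) + γ * (v - u) ^ 2 :=
  stmt15_general a b s s' s'' hcont hd1 hd2 hc2 u hu
end
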